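/- arXiv:1108.5677 — 2 statements merged into one kernel-verified Lean document; each statement's English description precedes it below -/
import Mathlib

section
/- Let p and ℓ be distinct primes with ℓ odd, q = p^f, m_ℓ the order of q mod ℓ, and r = ⌊n/m_ℓ⌋. If ℓ^i exactly divides q^{m_ℓ} - 1, then the ℓ-part of the order of GL_n(F_q) is ℓ^{ri + e}, where ℓ^e exactly divides r!. -/
open Finset

lemma padicValNat_prod' {ℓ : ℕ} [Fact ℓ.Prime] {α : Type*} (s : Finset α) (f : α → ℕ)
    (hf : ∀ a ∈ s, f a ≠ 0) :
    padicValNat ℓ (∏ a ∈ s, f a) = ∑ a ∈ s, padicValNat ℓ (f a) := by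
  induction s using Finset.cons_induction with
  | empty => simp
  | cons a s ha ih =>
    rw [Finset.prod_cons, Finset.sum_cons,
      padicValNat.mul (hf a (Finset.mem_cons_self a s))
        (Finset.prod_ne_zero_iff.2 fun b hb => hf b (Finset.mem_cons_of_mem hb)),
      ih fun b hb => hf b (Finset.mem_cons_of_mem hb)]

lemma padicValNat_factorial_sum' {ℓ : ℕ} [Fact ℓ.Prime] (r : ℕ) :
    padicValNat ℓ (Nat.factorial r) = ∑ s ∈ Finset.Icc 1 r, padicValNat ℓ s := by
  induction r with
  | zero => simp
  | succ r ih =>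
    rw [Nat.factorial_succ, padicValNat.mul (Nat.succ_ne_zero r) r.factorial_ne_zero, ih,
      Finset.sum_Icc_succ_top (by omega), add_comm]

/-- The `ℓ`-adic valuation of `|GL_n(F_q)|` for `q = p^f`, `ℓ ≠ p` an odd prime:
with `m` the order of `q` mod `ℓ`, `r = ⌊n/m⌋`, and `ℓ^i ∥ q^m - 1`, it equals
`r·i + v_ℓ(r!)`. -/
theorem valuation_card_GL (p ℓ f n m r i : ℕ) (hp : p.Prime) (hl : ℓ.Prime)
    (hne : ℓ ≠ p) (hodd : ℓ ≠ 2) (hf : 0 < f)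
    (F : Type*) [Field F] [Fintype F] (hq : Fintype.card F = p ^ f)
    (hm : m = orderOf ((p ^ f : ℕ) : ZMod ℓ)) (hr : r = n / m)
    (hi : ℓ ^ i ∣ (p ^ f) ^ m - 1 ∧ ¬ ℓ ^ (i + 1) ∣ (p ^ f) ^ m - 1) :
    padicValNat ℓ (Nat.card (GL (Fin n) F)) = r * i + padicValNat ℓ (Nat.factorial r) := by
  haveI : Fact ℓ.Prime := ⟨hl⟩
  set q := p ^ f with hqdef
  have hq2 : 1 < q := Nat.one_lt_pow hf.ne' hp.one_lt
  have hlq : ¬ ℓ ∣ q := fun h => hne ((Nat.prime_dvd_prime_iff_eq hl hp).1 (hl.dvd_of_dvd_pow h))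
  have hq0 : ((q : ℕ) : ZMod ℓ) ≠ 0 := by
    rw [Ne, ZMod.natCast_eq_zero_iff]; exact hlq
  have hfl : ((q : ℕ) : ZMod ℓ) ^ (ℓ - 1) = 1 := ZMod.pow_card_sub_one_eq_one hq0
  have hmdvd : m ∣ ℓ - 1 := by rw [hm]; exact orderOf_dvd_of_pow_eq_one hfl
  have hm0 : 0 < m := by
    rcases Nat.eq_zero_or_pos m with h | h
    · subst h; rw [zero_dvd_iff] at hmdvd; have := hl.two_le; omega
    · exact h
  have dvd_iff : ∀ k : ℕ, (ℓ ∣ q ^ k - 1 ↔ m ∣ k) := fun k => by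
    rw [← ZMod.natCast_eq_zero_iff, Nat.cast_sub (Nat.one_le_pow _ _ (by omega)),
      Nat.cast_pow, Nat.cast_one, sub_eq_zero, hm, orderOf_dvd_iff_pow_eq_one]
  have hqm1 : 1 < q ^ m := Nat.one_lt_pow hm0.ne' hq2
  have hqm0 : q ^ m - 1 ≠ 0 := by omega
  have i_eq : padicValNat ℓ (q ^ m - 1) = i := by
    have hi1 : i ≤ padicValNat ℓ (q ^ m - 1) := (padicValNat_dvd_iff_le hqm0).1 hi.1
    have hi2 : ¬ (i + 1 ≤ padicValNat ℓ (q ^ m - 1)) :=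
      fun h => hi.2 ((padicValNat_dvd_iff_le hqm0).2 h)
    omega
  have hodd' : Odd ℓ := hl.odd_of_ne_two hodd
  have hql : ¬ ℓ ∣ q ^ m := fun h => hlq (hl.dvd_of_dvd_pow h)
  have key : ∀ s : ℕ, s ≠ 0 → padicValNat ℓ (q ^ (m * s) - 1) = i + padicValNat ℓ s := by
    intro s hs
    have h := padicValNat.pow_sub_pow (x := q ^ m) (y := 1) hodd' hqm1 ((dvd_iff m).2 dvd_rfl)
      hql hs
    rw [one_pow, ← pow_mul] at h
    rw [h, i_eq]
  have key0 : ∀ k : ℕ, ¬ m ∣ k → padicValNat ℓ (q ^ k - 1) = 0 :=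
    fun k hk => padicValNat.eq_zero_of_not_dvd (fun h => hk ((dvd_iff k).1 h))
  -- the card
  rw [Matrix.card_GL_field, hq]
  have hne0 : ∀ j : Fin n, q ^ n - q ^ (j : ℕ) ≠ 0 := fun j => by
    have := Nat.pow_lt_pow_right hq2 j.isLt
    omega
  rw [padicValNat_prod' _ _ (fun j _ => hne0 j), Fin.sum_univ_eq_sum_range (fun j => padicValNat ℓ (q ^ n - q ^ j)) n]
  have factor : ∀ j ∈ Finset.range n,
      padicValNat ℓ (q ^ n - q ^ j) = padicValNat ℓ (q ^ (n - j) - 1) := by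
    intro j hj
    rw [Finset.mem_range] at hj
    have hsplit : q ^ n - q ^ j = q ^ j * (q ^ (n - j) - 1) := by
      rw [Nat.mul_sub, mul_one, ← pow_add]
      congr 2
      omega
    have h1 : 1 < q ^ (n - j) := Nat.one_lt_pow (by omega) hq2
    rw [hsplit, padicValNat.mul (pow_ne_zero _ (by omega)) (by omega),
      padicValNat.eq_zero_of_not_dvd (fun h => hlq (hl.dvd_of_dvd_pow h)), zero_add]
  rw [Finset.sum_congr rfl factor]
  have reflect : ∑ j ∈ Finset.range n, padicValNat ℓ (q ^ (n - j) - 1)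
      = ∑ k ∈ Finset.Icc 1 n, padicValNat ℓ (q ^ k - 1) := by
    rw [← Finset.Ico_add_one_right_eq_Icc, Finset.sum_Ico_eq_sum_range]
    rw [← Finset.sum_range_reflect]
    refine Finset.sum_congr rfl fun j hj => ?_
    rw [Finset.mem_range] at hj
    have h : n - (n - 1 - j) = 1 + j := by omega
    rw [h]
  rw [reflect]
  have filt : ∑ k ∈ Finset.Icc 1 n, padicValNat ℓ (q ^ k - 1)
      = ∑ k ∈ (Finset.Icc 1 n).filter (m ∣ ·), padicValNat ℓ (q ^ k - 1) :=
    (Finset.sum_filter_of_ne (fun k _ h => by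
      by_contra hmk
      exact h (key0 k hmk))).symm
  rw [filt]
  have bij : ∑ k ∈ (Finset.Icc 1 n).filter (m ∣ ·), padicValNat ℓ (q ^ k - 1)
      = ∑ s ∈ Finset.Icc 1 r, (i + padicValNat ℓ s) := by
    refine Finset.sum_nbij' (fun k => k / m) (fun s => m * s) ?_ ?_ ?_ ?_ ?_
    · intro k hk
      rw [Finset.mem_filter, Finset.mem_Icc] at hk
      obtain ⟨⟨h1, h2⟩, hdvd⟩ := hk
      rw [Finset.mem_Icc, hr]
      constructor
      · exact (Nat.one_le_div_iff hm0).2 (Nat.le_of_dvd (by omega) hdvd)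
      · exact Nat.div_le_div_right h2
    · intro s hs
      rw [Finset.mem_Icc] at hs
      rw [Finset.mem_filter, Finset.mem_Icc]
      refine ⟨⟨by nlinarith [hs.1, hm0], ?_⟩, Dvd.intro s rfl⟩
      have := hs.2
      rw [hr, Nat.le_div_iff_mul_le hm0] at this
      nlinarith [this]
    · intro k hk
      rw [Finset.mem_filter] at hk
      exact Nat.mul_div_cancel' hk.2
    · intro s _
      exact Nat.mul_div_cancel_left s hm0
    · intro k hk
      rw [Finset.mem_filter, Finset.mem_Icc] at hk
      obtain ⟨⟨h1, _⟩, hdvd⟩ := hk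
      have hk0 : k / m ≠ 0 := by
        have := Nat.le_of_dvd (by omega) hdvd
        have := (Nat.one_le_div_iff hm0).2 this
        omega
      rw [← key _ hk0, Nat.mul_div_cancel' hdvd]
  rw [bij, Finset.sum_add_distrib, Finset.sum_const, Nat.card_Icc, smul_eq_mul,
    padicValNat_factorial_sum']
  congr 1
end

section
/- For a prime p with p ≡ 2 (mod 3) and p ≠ 2, the 3-Sylow subgroups of GL_m(F_p) are abelian for all m ≤ 5. -/
/-!
For `p ≡ 2 (mod 3)` we have `v₃(p^k - 1) = 0` for odd `k` and, by lifting the exponent,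
`v₃(p^(2j) - 1) = v₃(p² - 1) + v₃(j)`. Hence `v₃ |GL_{2n+r}(𝔽_p)| = n·v₃(p² - 1) + v₃(n!)`
for `r ≤ 1`. The unit group of `𝔽_{p²}ⁿ × 𝔽_pʳ`, an abelian subgroup of `GL_{2n+r}(𝔽_p)` via the
regular representation, has order `(p² - 1)ⁿ (p - 1)ʳ`, so its Sylow `3`-subgroup is a Sylow
`3`-subgroup of `GL_{2n+r}(𝔽_p)` as soon as `3 ∤ n!`, i.e. `n ≤ 2`, which covers all `m ≤ 5`.
All Sylow `3`-subgroups being conjugate, they are abelian.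
-/

open Finset Module

theorem Sylow.isMulCommutative_of_injective {G H : Type*} [Group G] [Finite G] [CommGroup H]
    [Finite H] {q : ℕ} [Fact q.Prime] (f : H →* G) (hf : Function.Injective f)
    (hcard : (Nat.card H).factorization q = (Nat.card G).factorization q) (P : Sylow q G) :
    IsMulCommutative P := by
  let Q : Sylow q H := Classical.arbitrary _
  let P₀ : Sylow q G := Sylow.ofCard (Q.map f) <| by
    rw [Subgroup.card_map_of_injective hf, Q.card_eq_multiplicity, hcard]
  have : IsMulCommutative (P₀ : Subgroup G) := inferInstanceAs (IsMulCommutative (Q.map f))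
  obtain ⟨g, rfl⟩ := MulAction.exists_smul_eq G P₀ P
  rw [Sylow.coe_subgroup_smul, Subgroup.pointwise_smul_def]
  exact Subgroup.map_isMulCommutative _ _

theorem exists_injective_units_GL {F A : Type*} [Field F] [Ring A] [Algebra F A]
    [FiniteDimensional F A] {m : ℕ} (h : finrank F A = m) :
    ∃ f : Aˣ →* GL (Fin m) F, Function.Injective f :=
  ⟨Units.map (Algebra.leftMulMatrix (Module.finBasisOfFinrankEq F A h)).toMonoidHom,
    Units.map_injective (Algebra.leftMulMatrix_injective _)⟩

theorem Matrix.factorization_card_GL_of_not_dvd {𝔽 : Type*} [Field 𝔽] [Fintype 𝔽] {ℓ : ℕ}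
    (hℓ : ¬ ℓ ∣ Fintype.card 𝔽) (m : ℕ) :
    (Nat.card (GL (Fin m) 𝔽)).factorization ℓ =
      ∑ k ∈ range m, (Fintype.card 𝔽 ^ (k + 1) - 1).factorization ℓ := by
  set Q := Fintype.card 𝔽
  have hQ : 1 < Q := Fintype.one_lt_card
  -- the exponent `m - 1 - i + 1` is the shape produced by `Finset.sum_range_reflect`
  have hsub : ∀ i < m, Q ^ m - Q ^ i = Q ^ i * (Q ^ (m - 1 - i + 1) - 1) := by
    intro i hi
    rw [Nat.mul_sub, mul_one, ← pow_add]
    congr 2; omega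
  have hne : ∀ k, Q ^ (k + 1) - 1 ≠ 0 := fun k =>
    Nat.sub_ne_zero_of_lt (Nat.one_lt_pow k.succ_ne_zero hQ)
  rw [Matrix.card_GL_field, Fin.prod_univ_eq_prod_range (fun i => Q ^ m - Q ^ i),
    Finset.prod_congr rfl fun i hi => hsub i (mem_range.mp hi),
    Nat.factorization_prod fun i _ => mul_ne_zero (by positivity) (hne _),
    Finsupp.coe_finsetSum, Finset.sum_apply, ← Finset.sum_range_reflect]
  refine Finset.sum_congr rfl fun i hi => ?_
  have hi : i < m := mem_range.mp hi
  rw [Nat.factorization_mul (by positivity) (hne _), Finsupp.add_apply, Nat.factorization_pow,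
    Finsupp.smul_apply, Nat.factorization_eq_zero_of_not_dvd hℓ, smul_zero, zero_add,
    show m - 1 - (m - 1 - i) = i by omega]

theorem Nat.factorization_three_pow_odd_sub_one {p : ℕ} (hmod : p % 3 = 2) (j : ℕ) :
    (p ^ (2 * j + 1) - 1).factorization 3 = 0 := by
  have hpow : p ^ (2 * j + 1) % 3 = 2 := by
    rw [Nat.pow_mod, hmod, pow_succ, pow_mul, Nat.mul_mod, Nat.pow_mod]
    norm_num
  exact Nat.factorization_eq_zero_of_not_dvd (by omega)

theorem Nat.factorization_three_pow_even_sub_one {p : ℕ} (hp : 1 < p) (hmod : p % 3 = 2) {j : ℕ}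
    (hj : j ≠ 0) :
    (p ^ (2 * j) - 1).factorization 3 = (p ^ 2 - 1).factorization 3 + j.factorization 3 := by
  have hsq : p ^ 2 % 3 = 1 := by rw [Nat.pow_mod, hmod]
  have hsq1 : 1 < p ^ 2 := Nat.one_lt_pow two_ne_zero hp
  simp only [Nat.factorization_def _ Nat.prime_three]
  have := padicValNat.pow_sub_pow (p := 3) (by decide) hsq1 (by omega) (by omega) hj
  rwa [one_pow, ← pow_mul] at this

theorem Matrix.factorization_three_card_GL {p : ℕ} (hp : p.Prime) (hmod : p % 3 = 2) (n : ℕ)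
    {r : ℕ} (hr : r ≤ 1) :
    (Nat.card (GL (Fin (2 * n + r)) (ZMod p))).factorization 3 =
      n * (p ^ 2 - 1).factorization 3 + n.factorial.factorization 3 := by
  have := Fact.mk hp
  set f : ℕ → ℕ := fun k => (p ^ (k + 1) - 1).factorization 3
  have hsum : ∀ j, ∑ k ∈ range (2 * j), f k =
      j * (p ^ 2 - 1).factorization 3 + j.factorial.factorization 3 := by
    intro j
    induction j with
    | zero => simp
    | succ j ih =>
      rw [show 2 * (j + 1) = 2 * j + 1 + 1 by ring, sum_range_succ, sum_range_succ, ih]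
      simp only [f, Nat.factorization_three_pow_odd_sub_one hmod,
        show 2 * j + 1 + 1 = 2 * (j + 1) by ring,
        Nat.factorization_three_pow_even_sub_one hp.one_lt hmod j.succ_ne_zero,
        Nat.factorial_succ, Nat.factorization_mul j.succ_ne_zero j.factorial_ne_zero,
        Finsupp.add_apply]
      ring
  have hp3 : ¬ 3 ∣ Fintype.card (ZMod p) := by rw [ZMod.card]; omega
  rw [Matrix.factorization_card_GL_of_not_dvd hp3, ZMod.card]
  interval_cases r
  · exact hsum n
  · rw [sum_range_succ, hsum n, Nat.factorization_three_pow_odd_sub_one hmod, add_zero]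

/-- `𝔽_{p²}ⁿ × 𝔽_pʳ`, whose unit group is a maximal torus of `GL_{2n+r}(𝔽_p)`. -/
abbrev TorusAlgebra (p n r : ℕ) [Fact p.Prime] : Type :=
  (Fin n → GaloisField p 2) × (Fin r → ZMod p)

theorem finrank_torusAlgebra (p n r : ℕ) [Fact p.Prime] :
    finrank (ZMod p) (TorusAlgebra p n r) = 2 * n + r := by
  simp [Module.finrank_pi_fintype, GaloisField.finrank p two_ne_zero, mul_comm]

theorem card_units_torusAlgebra (p n r : ℕ) [Fact p.Prime] :
    Nat.card (TorusAlgebra p n r)ˣ = (p ^ 2 - 1) ^ n * (p - 1) ^ r := by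
  rw [Nat.card_congr MulEquiv.prodUnits.toEquiv, Nat.card_prod,
    Nat.card_congr MulEquiv.piUnits.toEquiv, Nat.card_congr MulEquiv.piUnits.toEquiv,
    Nat.card_pi, Nat.card_pi]
  simp [Nat.card_units, GaloisField.card p 2 two_ne_zero, Nat.card_eq_fintype_card,
    Nat.totient_prime Fact.out]

theorem factorization_three_card_units_torusAlgebra {p : ℕ} [Fact p.Prime] (hmod : p % 3 = 2)
    (n r : ℕ) :
    (Nat.card (TorusAlgebra p n r)ˣ).factorization 3 = n * (p ^ 2 - 1).factorization 3 := by
  have hp := (Fact.out : p.Prime).one_lt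
  have hp1 : (p - 1).factorization 3 = 0 := Nat.factorization_eq_zero_of_not_dvd (by omega)
  rw [card_units_torusAlgebra, Nat.factorization_mul, Nat.factorization_pow, Nat.factorization_pow]
  · simp [hp1]
  · exact pow_ne_zero _ (Nat.sub_ne_zero_of_lt (Nat.one_lt_pow two_ne_zero hp))
  · exact pow_ne_zero _ (by omega)

theorem sylow3_GL_abelian_general (p : ℕ) (hp : p.Prime) (hmod : p % 3 = 2) :
    ∀ m ≤ 5, ∀ P : Sylow 3 (GL (Fin m) (ZMod p)),
      ∀ x y : (P : Subgroup (GL (Fin m) (ZMod p))), x * y = y * x := by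
  have := Fact.mk hp
  intro m hm P x y
  obtain ⟨n, r, hn, hr, rfl⟩ : ∃ n r, n < 3 ∧ r ≤ 1 ∧ m = 2 * n + r :=
    ⟨m / 2, m % 2, by omega, by omega, by omega⟩
  obtain ⟨f, hf⟩ := exists_injective_units_GL (finrank_torusAlgebra p n r)
  have hfact : n.factorial.factorization 3 = 0 :=
    Nat.factorization_eq_zero_of_not_dvd ((Nat.prime_three.dvd_factorial).not.mpr (by omega))
  have := Sylow.isMulCommutative_of_injective f hf (by
    rw [factorization_three_card_units_torusAlgebra hmod,
      Matrix.factorization_three_card_GL hp hmod n hr, hfact, add_zero]) P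
  exact mul_comm' x y

/-- For a prime `p ≡ 2 (mod 3)`, `p ≠ 2`, the `3`-Sylow subgroups of `GL_m(F_p)`
are abelian for all `m ≤ 5`. -/
theorem sylow3_GL_abelian (p : ℕ) (hp : p.Prime) (hmod : p % 3 = 2) (hp2 : p ≠ 2) :
    ∀ m ≤ 5, ∀ P : Sylow 3 (GL (Fin m) (ZMod p)),
      ∀ x y : (P : Subgroup (GL (Fin m) (ZMod p))), x * y = y * x :=
  sylow3_GL_abelian_general p hp hmod
end
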